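/- arXiv:2210.13158 — 2 statements merged into one kernel-verified Lean document; each statement's English description precedes it below -/
import Mathlib

section
/- Let -1 ≤ E < D ≤ 1 with E ≤ min{(D-1)/2, (3D-1)/2}. If g(z) = z + b_2 z^2 + b_3 z^3 + ... belongs to the Janowski starlike class S*[D,E], then |2 b_2^2 b_3 - 2 b_2^2 - b_3^2 + 1| ≤ 1 + 2(D-E)^2 + (3D^2 - 5DE + 2E^2)(D^2 - 3DE + 2E^2)/4, and this bound is sharp. -/
/-!
Write `g z = z G(z)` and `ω z = z φ(z)` for the Schwarz function `ω` with
`z g' / g = (1 + D ω) / (1 + E ω)`. The equation becomes `G' (1 + E z φ) = (D - E) G φ`, and its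
value and derivative at `0` give `b₂ = (D - E) c₁` and `2 b₃ = (D - E) c₂ + (D - 2E) b₂ c₁` with
`c₁ = φ(0)`, `c₂ = φ'(0)`. The Schwarz–Pick lemma for `φ` gives `|c₂| ≤ 1 - |c₁|²`. In terms of
`c₁, c₂` the functional is a polynomial, and the triangle inequality combined with
`|c₂| ≤ 1 - |c₁|²` bounds it by a quadratic in `|c₁|²` which, under the hypotheses on `D, E`,
is maximal at `|c₁| = 1`. Equality holds for `ω z = i z`.
-/

open Complex Metric Set Filter Topology ComplexConjugate

open FormalMultilinearSeries in
theorem hasFPowerSeriesOnBall_ofScalars_of_hasSum {g : ℂ → ℂ} {b : ℕ → ℂ}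
    (h : ∀ z ∈ ball (0 : ℂ) 1, HasSum (fun n ↦ b n * z ^ n) (g z)) :
    HasFPowerSeriesOnBall g (ofScalars ℂ b) 0 1 where
  r_le := by
    refine ENNReal.le_of_forall_nnreal_lt fun r hr ↦ (ofScalars ℂ b).le_radius_of_summable ?_
    have hr' : ((r : ℝ) : ℂ) ∈ ball (0 : ℂ) 1 := by simpa using (show (r : ℝ) < 1 from mod_cast hr)
    simpa [ofScalars_norm, norm_mul] using (h _ hr').summable.norm
  r_pos := one_pos
  hasSum := fun {y} hy ↦ by
    rw [← ENNReal.coe_one, Metric.eball_coe, NNReal.coe_one] at hy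
    simpa [ofScalars_apply_eq, smul_eq_mul, mul_comm] using h y hy

theorem HasFPowerSeriesAt.iteratedDeriv_eq_factorial_mul_coeff {𝕜 : Type*}
    [NontriviallyNormedField 𝕜] [CompleteSpace 𝕜] {f : 𝕜 → 𝕜}
    {p : FormalMultilinearSeries 𝕜 𝕜 𝕜} {x : 𝕜} (hf : HasFPowerSeriesAt f p x) (n : ℕ) :
    iteratedDeriv n f x = n.factorial * p.coeff n := by
  obtain ⟨r, hr⟩ := hf
  rw [iteratedDeriv_eq_iteratedFDeriv, ← hr.factorial_smul, nsmul_eq_mul]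
  rfl

theorem Complex.norm_one_sub_conj_mul_sq_sub_norm_sub_sq (c w : ℂ) :
    ‖1 - conj c * w‖ ^ 2 - ‖w - c‖ ^ 2 = (1 - ‖c‖ ^ 2) * (1 - ‖w‖ ^ 2) := by
  simp only [Complex.sq_norm, Complex.normSq_apply, sub_re, sub_im, mul_re, mul_im, one_re,
    one_im, conj_re, conj_im]
  ring

theorem Complex.norm_sub_le_norm_one_sub_conj_mul {c w : ℂ} (hc : ‖c‖ ≤ 1) (hw : ‖w‖ ≤ 1) :
    ‖w - c‖ ≤ ‖1 - conj c * w‖ := by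
  have := norm_one_sub_conj_mul_sq_sub_norm_sub_sq c w
  have : 0 ≤ (1 - ‖c‖ ^ 2) * (1 - ‖w‖ ^ 2) := mul_nonneg (by nlinarith [norm_nonneg c])
    (by nlinarith [norm_nonneg w])
  exact (sq_le_sq₀ (norm_nonneg _) (norm_nonneg _)).1 (by linarith)

/-- The Schwarz–Pick lemma at the origin. -/
theorem Complex.norm_deriv_le_one_sub_sq_of_mapsTo_ball {φ : ℂ → ℂ}
    (hd : DifferentiableOn ℂ φ (ball 0 1)) (hmaps : MapsTo φ (ball 0 1) (closedBall 0 1)) :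
    ‖deriv φ 0‖ ≤ 1 - ‖φ 0‖ ^ 2 := by
  have h0 : (0 : ℂ) ∈ ball 0 1 := mem_ball_self one_pos
  have hle : ∀ z ∈ ball (0 : ℂ) 1, ‖φ z‖ ≤ 1 := fun z hz ↦ by simpa using hmaps hz
  rcases (hle 0 h0).eq_or_lt with hc | hc
  · -- `‖φ‖` attains its maximum at the centre, so `φ` is constant
    have hmax : IsMaxOn (norm ∘ φ) (ball 0 1) 0 := fun z hz ↦ (hle z hz).trans hc.ge
    have hconst : φ =ᶠ[𝓝 0] fun _ ↦ φ 0 :=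
      eventually_of_mem (isOpen_ball.mem_nhds h0) fun z hz ↦
        eqOn_of_isPreconnected_of_isMaxOn_norm (convex_ball 0 1).isPreconnected isOpen_ball hd h0
          hmax hz
    simp [hconst.deriv_eq, hc]
  · have hc' : 0 < 1 - ‖φ 0‖ ^ 2 := by nlinarith [norm_nonneg (φ 0)]
    have hden : ∀ z ∈ ball (0 : ℂ) 1, 1 - conj (φ 0) * φ z ≠ 0 := fun z hz h ↦ by
      have := congrArg norm (sub_eq_zero.1 h).symm
      rw [norm_mul, norm_conj, norm_one] at this
      nlinarith [hle z hz, norm_nonneg (φ z), norm_nonneg (φ 0)]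
    -- compose with the disc automorphism sending `φ 0` to `0`
    set B : ℂ → ℂ := fun z ↦ (φ z - φ 0) / (1 - conj (φ 0) * φ z)
    have hBd : DifferentiableOn ℂ B (ball 0 1) :=
      (hd.sub_const _).div ((differentiableOn_const _).sub ((differentiableOn_const _).mul hd)) hden
    have hBmaps : MapsTo B (ball 0 1) (closedBall (B 0) 1) := fun z hz ↦ by
      simp only [B, sub_self, zero_div, mem_closedBall_zero_iff, norm_div]
      exact div_le_one_of_le₀ (norm_sub_le_norm_one_sub_conj_mul hc.le (hle z hz)) (norm_nonneg _)
    have hφ : HasDerivAt φ (deriv φ 0) 0 :=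
      (hd.differentiableAt (isOpen_ball.mem_nhds h0)).hasDerivAt
    have hB : HasDerivAt B (deriv φ 0 / ((1 - ‖φ 0‖ ^ 2 : ℝ) : ℂ)) 0 := by
      refine ((hφ.sub_const _).div ((hφ.const_mul _).const_sub 1) (hden 0 h0)).congr_deriv ?_
      have : ((1 - ‖φ 0‖ ^ 2 : ℝ) : ℂ) ≠ 0 := ofReal_ne_zero.2 hc'.ne'
      rw [sub_self, zero_mul, sub_zero, mul_comm (conj _), mul_conj, normSq_eq_norm_sq]
      push_cast at this ⊢
      field_simp
    have := norm_deriv_le_one_of_mapsTo_ball hBd hBmaps one_pos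
    rwa [hB.deriv, norm_div, norm_real, Real.norm_of_nonneg hc'.le, div_le_one₀ hc'] at this

theorem norm_deriv_dslope_le_one_sub_sq {ω : ℂ → ℂ} (hω : DifferentiableOn ℂ ω (ball 0 1))
    (hω0 : ω 0 = 0) (hmaps : MapsTo ω (ball 0 1) (ball 0 1)) :
    ‖deriv (dslope ω 0) 0‖ ≤ 1 - ‖dslope ω 0 0‖ ^ 2 := by
  have hmaps' : MapsTo ω (ball 0 1) (closedBall (ω 0) 1) := by
    simpa [hω0] using hmaps.mono_right ball_subset_closedBall
  refine norm_deriv_le_one_sub_sq_of_mapsTo_ball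
    ((differentiableOn_dslope (isOpen_ball.mem_nhds (mem_ball_self one_pos))).2 hω) fun z hz ↦ ?_
  simpa using norm_dslope_le_div_of_mapsTo_ball hω hmaps' hz

theorem AnalyticAt.dslope {𝕜 E : Type*} [NontriviallyNormedField 𝕜] [NormedAddCommGroup E]
    [NormedSpace 𝕜 E] {f : 𝕜 → E} {a : 𝕜} (hf : AnalyticAt 𝕜 f a) :
    AnalyticAt 𝕜 (dslope f a) a :=
  let ⟨_, hp⟩ := hf
  hp.has_fpower_series_dslope_fslope.analyticAt

theorem dslope_const_mul_id (c : ℂ) : dslope (fun z ↦ c * z) 0 = fun _ ↦ c := by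
  funext z
  rcases eq_or_ne z 0 with rfl | hz
  · simp [dslope_same]
  · simp [dslope_of_ne _ hz, slope_def_field, hz]

theorem one_add_mul_ne_zero {a w : ℂ} (ha : ‖a‖ ≤ 1) (hw : ‖w‖ < 1) : 1 + a * w ≠ 0 := by
  intro h
  have := congrArg norm (eq_neg_of_add_eq_zero_right h)
  rw [norm_mul, norm_neg, norm_one] at this
  nlinarith [norm_nonneg a, norm_nonneg w]

theorem deriv_dslope_mul_eventuallyEq {D E : ℂ} (hD : ‖D‖ ≤ 1) (hE : ‖E‖ ≤ 1) {g ω : ℂ → ℂ}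
    (hg : AnalyticAt ℂ g 0) (hg0 : g 0 = 0) (hω : AnalyticAt ℂ ω 0) (hω0 : ω 0 = 0)
    (hmaps : MapsTo ω (ball 0 1) (ball 0 1))
    (heq : ∀ z ∈ ball (0 : ℂ) 1, z ≠ 0 →
      z * deriv g z / g z = (1 + D * ω z) / (1 + E * ω z)) :
    (fun z ↦ deriv (dslope g 0) z * (1 + E * z * dslope ω 0 z)) =ᶠ[𝓝 0]
      fun z ↦ (D - E) * dslope g 0 z * dslope ω 0 z := by
  set G := dslope g 0
  set φ := dslope ω 0
  have hG : AnalyticAt ℂ G 0 := hg.dslope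
  have hφ : AnalyticAt ℂ φ 0 := hω.dslope
  have hgG : g = fun z ↦ z * G z := funext fun z ↦ by
    simpa using (sub_smul_dslope_of_zero hg0 z).symm
  have hωφ : ∀ z, ω z = z * φ z := fun z ↦ by simpa using (sub_smul_dslope_of_zero hω0 z).symm
  have hcont : ContinuousAt (fun z ↦ deriv G z * (1 + E * z * φ z)) 0 :=
    (hG.deriv.continuousAt).mul (continuousAt_const.add
      ((continuousAt_const.mul continuousAt_id).mul hφ.continuousAt))
  refine (hcont.eventuallyEq_nhds_iff_eventuallyEq_nhdsNE
    ((continuousAt_const.mul hG.continuousAt).mul hφ.continuousAt)).1 ?_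
  filter_upwards [nhdsWithin_le_nhds (hG.eventually_analyticAt),
    nhdsWithin_le_nhds (isOpen_ball.mem_nhds (mem_ball_self one_pos)), self_mem_nhdsWithin]
    with z hGz hz hz0
  have hw : ‖ω z‖ < 1 := by simpa using hmaps hz
  have hEw := one_add_mul_ne_zero hE hw
  have hDw := one_add_mul_ne_zero hD hw
  have hderiv : deriv g z = G z + z * deriv G z := by
    rw [hgG]
    simpa using ((hasDerivAt_id' z).fun_mul hGz.differentiableAt.hasDerivAt).deriv
  have hGz0 : G z ≠ 0 := fun h ↦ by
    have := heq z hz hz0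
    rw [hgG] at this
    simp [h] at this
    exact div_ne_zero hDw hEw this.symm
  have := heq z hz hz0
  rw [hderiv, hgG, div_eq_div_iff (mul_ne_zero hz0 hGz0) hEw, hωφ] at this
  show deriv G z * (1 + E * z * φ z) = (D - E) * G z * φ z
  apply mul_left_cancel₀ (pow_ne_zero 2 hz0)
  linear_combination this

theorem janowski_coeff_relations {D E : ℂ} (hD : ‖D‖ ≤ 1) (hE : ‖E‖ ≤ 1) {g ω : ℂ → ℂ}
    {b : ℕ → ℂ} (hb0 : b 0 = 0) (hb1 : b 1 = 1)
    (hsum : ∀ z ∈ ball (0 : ℂ) 1, HasSum (fun n ↦ b n * z ^ n) (g z))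
    (hω : AnalyticAt ℂ ω 0) (hω0 : ω 0 = 0) (hmaps : MapsTo ω (ball 0 1) (ball 0 1))
    (heq : ∀ z ∈ ball (0 : ℂ) 1, z ≠ 0 →
      z * deriv g z / g z = (1 + D * ω z) / (1 + E * ω z)) :
    b 2 = (D - E) * dslope ω 0 0 ∧
      2 * b 3 = (D - E) * deriv (dslope ω 0) 0 + (D - 2 * E) * b 2 * dslope ω 0 0 := by
  have hP := hasFPowerSeriesOnBall_ofScalars_of_hasSum hsum
  have hg0 : g 0 = 0 := by simpa [hb0] using (hP.coeff_zero 1).symm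
  have hG := hP.hasFPowerSeriesAt.has_fpower_series_dslope_fslope
  have hGcoeff (n : ℕ) : iteratedDeriv n (dslope g 0) 0 = n.factorial * b (n + 1) := by
    rw [hG.iteratedDeriv_eq_factorial_mul_coeff, FormalMultilinearSeries.coeff_fslope,
      FormalMultilinearSeries.coeff_ofScalars]
  have hG0 : dslope g 0 0 = 1 := by simpa [hb1] using hGcoeff 0
  have hG1 : deriv (dslope g 0) 0 = b 2 := by simpa using hGcoeff 1
  have hG2 : deriv (deriv (dslope g 0)) 0 = 2 * b 3 := by
    simpa [iteratedDeriv_succ] using hGcoeff 2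
  have hrel := deriv_dslope_mul_eventuallyEq hD hE hP.analyticAt hg0 hω hω0 hmaps heq
  have hφ := hω.dslope.differentiableAt.hasDerivAt
  have hG' := hG.analyticAt.differentiableAt.hasDerivAt
  have hG'' := hG.analyticAt.deriv.differentiableAt.hasDerivAt
  have hlhs := hG''.fun_mul (((hasDerivAt_id' (0 : ℂ)).const_mul E).fun_mul hφ |>.const_add 1)
  have hrhs := (hG'.const_mul (D - E)).fun_mul hφ
  have h0 := hrel.eq_of_nhds
  have h1 := hrel.deriv_eq
  rw [hlhs.deriv, hrhs.deriv] at h1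
  simp only [hG0, hG1, hG2, mul_zero, zero_mul, add_zero, mul_one] at h0 h1
  constructor
  · linear_combination h0
  · linear_combination h1

/-- The solution is `g z = z exp (∫₀^z (D - E) ω(ζ) / (ζ (1 + E ω(ζ))) dζ)`. -/
theorem exists_janowski_of_schwarz {D E : ℂ} (hE : ‖E‖ ≤ 1) {ω : ℂ → ℂ}
    (hω : DifferentiableOn ℂ ω (ball 0 1)) (hω0 : ω 0 = 0)
    (hmaps : MapsTo ω (ball 0 1) (ball 0 1)) :
    ∃ g : ℂ → ℂ, DifferentiableOn ℂ g (ball 0 1) ∧ g 0 = 0 ∧ deriv g 0 = 1 ∧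
      ∀ z ∈ ball (0 : ℂ) 1, z ≠ 0 → z * deriv g z / g z = (1 + D * ω z) / (1 + E * ω z) := by
  have hden : ∀ z ∈ ball (0 : ℂ) 1, 1 + E * ω z ≠ 0 := fun z hz ↦
    one_add_mul_ne_zero hE (by simpa using hmaps hz)
  have hφ : DifferentiableOn ℂ (dslope ω 0) (ball 0 1) :=
    (differentiableOn_dslope (isOpen_ball.mem_nhds (mem_ball_self one_pos))).2 hω
  have hp : DifferentiableOn ℂ (fun z ↦ (D - E) * dslope ω 0 z / (1 + E * ω z)) (ball 0 1) :=
    (hφ.const_mul _).div ((differentiableOn_const 1).add (hω.const_mul E)) hden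
  obtain ⟨L, hL0, hL⟩ := hp.isExactOn_ball.with_val_at 0 0
  have hg (z : ℂ) (hz : z ∈ ball (0 : ℂ) 1) : HasDerivAt (fun z ↦ z * exp (L z))
      (exp (L z) + z * (exp (L z) * ((D - E) * dslope ω 0 z / (1 + E * ω z)))) z := by
    simpa using (hasDerivAt_id' z).fun_mul (hL z hz).cexp
  refine ⟨fun z ↦ z * exp (L z), fun z hz ↦ (hg z hz).differentiableAt.differentiableWithinAt,
    by simp, by simp [(hg 0 (mem_ball_self one_pos)).deriv, hL0], fun z hz hz0 ↦ ?_⟩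
  have hωz : ω z = z * dslope ω 0 z := by simpa using (sub_smul_dslope_of_zero hω0 z).symm
  have := hden z hz
  rw [(hg z hz).deriv]
  field_simp
  rw [hωz]
  ring

def coeffFunctional (b₂ b₃ : ℂ) : ℂ := 2 * b₂ ^ 2 * b₃ - 2 * b₂ ^ 2 - b₃ ^ 2 + 1

theorem coeffFunctional_eq {D E c₁ c₂ b₃ : ℂ}
    (h₃ : 2 * b₃ = (D - E) * c₂ + (D - 2 * E) * ((D - E) * c₁) * c₁) :
    coeffFunctional ((D - E) * c₁) b₃ =
      1 - 2 * (D - E) ^ 2 * c₁ ^ 2 + ((D - E) ^ 4 - (D - E) ^ 2 * D ^ 2 / 4) * c₁ ^ 4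
        + (D - E) ^ 2 * D / 2 * (c₁ ^ 2 * c₂) - (D - E) ^ 2 / 4 * c₂ ^ 2 := by
  have : b₃ = ((D - E) * c₂ + (D - 2 * E) * ((D - E) * c₁) * c₁) / 2 := by
    linear_combination h₃ / 2
  rw [coeffFunctional, this]
  ring

theorem sq_mul_sq_div_four_le_pow_four {t D : ℝ} (hD : 1 + |D| ≤ 2 * t) :
    t ^ 2 * D ^ 2 / 4 ≤ t ^ 4 := by
  have : D ^ 2 ≤ 4 * t ^ 2 := by nlinarith [sq_abs D, abs_nonneg D]
  nlinarith [mul_le_mul_of_nonneg_left this (sq_nonneg t)]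

theorem coeffFunctional_majorant_le {t D a r : ℝ} (hD : 1 + |D| ≤ 2 * t) (hr₀ : 0 ≤ r)
    (hr : r ≤ 1 - a ^ 2) :
    1 + 2 * t ^ 2 * a ^ 2 + (t ^ 4 - t ^ 2 * D ^ 2 / 4) * a ^ 4 + t ^ 2 * |D| / 2 * (a ^ 2 * r)
      + t ^ 2 / 4 * r ^ 2 ≤ 1 + 2 * t ^ 2 + (t ^ 4 - t ^ 2 * D ^ 2 / 4) := by
  have hα : t ^ 2 * |D| / 4 ≤ t ^ 4 - t ^ 2 * D ^ 2 / 4 := by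
    have : 0 ≤ 4 * t ^ 2 - D ^ 2 - |D| := by nlinarith [sq_abs D, abs_nonneg D]
    nlinarith [mul_nonneg (sq_nonneg t) this]
  have hτD := mul_nonneg (sq_nonneg t) (abs_nonneg D)
  have hm : 0 ≤ 1 - a ^ 2 := hr₀.trans hr
  -- the defect is a sum of four nonnegative terms
  have T₁ : 0 ≤ (1 - a ^ 2) ^ 2 * (t ^ 4 - t ^ 2 * D ^ 2 / 4 + 7 * t ^ 2 / 4) :=
    mul_nonneg (sq_nonneg _) (by linarith [sq_nonneg t])
  have T₂ : 0 ≤ (1 - a ^ 2) * a ^ 2 *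
      (2 * (t ^ 4 - t ^ 2 * D ^ 2 / 4) + 2 * t ^ 2 - t ^ 2 * |D| / 2) :=
    mul_nonneg (mul_nonneg hm (sq_nonneg a)) (by linarith [sq_nonneg t])
  have T₃ : 0 ≤ t ^ 2 / 4 * ((1 - a ^ 2 - r) * (1 - a ^ 2 + r)) :=
    mul_nonneg (by positivity) (mul_nonneg (by linarith) (by linarith))
  have T₄ : 0 ≤ t ^ 2 * |D| / 2 * (a ^ 2 * (1 - a ^ 2 - r)) :=
    mul_nonneg (by positivity) (mul_nonneg (sq_nonneg a) (by linarith))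
  linarith

theorem norm_coeffFunctional_le {D E : ℝ} (hDE : 1 + |D| ≤ 2 * (D - E)) {c₁ c₂ b₃ : ℂ}
    (h₃ : 2 * b₃ = (D - E) * c₂ + (D - 2 * E) * ((D - E) * c₁) * c₁)
    (hc : ‖c₂‖ ≤ 1 - ‖c₁‖ ^ 2) :
    ‖coeffFunctional ((D - E) * c₁) b₃‖ ≤
      1 + 2 * (D - E) ^ 2 + ((D - E) ^ 4 - (D - E) ^ 2 * D ^ 2 / 4) := by
  set t := D - E
  have hα := sub_nonneg.2 (sq_mul_sq_div_four_le_pow_four hDE)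
  rw [coeffFunctional_eq (by exact_mod_cast h₃), show (D : ℂ) - E = t by simp [t]]
  set x₁ : ℂ := 2 * (t : ℂ) ^ 2 * c₁ ^ 2
  set x₂ : ℂ := ((t : ℂ) ^ 4 - t ^ 2 * D ^ 2 / 4) * c₁ ^ 4
  set x₃ : ℂ := (t : ℂ) ^ 2 * D / 2 * (c₁ ^ 2 * c₂)
  set x₄ : ℂ := (t : ℂ) ^ 2 / 4 * c₂ ^ 2
  have hx₁ : ‖x₁‖ = 2 * t ^ 2 * ‖c₁‖ ^ 2 := by simp [x₁]
  have hx₂ : ‖x₂‖ = (t ^ 4 - t ^ 2 * D ^ 2 / 4) * ‖c₁‖ ^ 4 := by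
    simp only [x₂]
    rw [show (t : ℂ) ^ 4 - t ^ 2 * D ^ 2 / 4 = ((t ^ 4 - t ^ 2 * D ^ 2 / 4 : ℝ) : ℂ) by
      push_cast; rfl, norm_mul, norm_real, Real.norm_of_nonneg hα, norm_pow]
  have hx₃ : ‖x₃‖ = t ^ 2 * |D| / 2 * (‖c₁‖ ^ 2 * ‖c₂‖) := by simp [x₃]
  have hx₄ : ‖x₄‖ = t ^ 2 / 4 * ‖c₂‖ ^ 2 := by simp [x₄]
  have := coeffFunctional_majorant_le hDE (norm_nonneg c₂) hc
  have := norm_sub_le (1 - x₁ + x₂ + x₃) x₄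
  have := norm_add_le (1 - x₁ + x₂) x₃
  have := norm_add_le (1 - x₁) x₂
  have := norm_sub_le 1 x₁
  simp only [norm_one] at *
  linarith

theorem norm_coeffFunctional_mul_I {D E : ℝ} (hDE : 1 + |D| ≤ 2 * (D - E)) {b₃ : ℂ}
    (h₃ : 2 * b₃ = (D - 2 * E) * ((D - E) * I) * I) :
    ‖coeffFunctional ((D - E) * I) b₃‖ =
      1 + 2 * (D - E) ^ 2 + ((D - E) ^ 4 - (D - E) ^ 2 * D ^ 2 / 4) := by
  rw [coeffFunctional_eq (c₂ := 0) (by rw [h₃]; ring), I_pow_four, I_sq]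
  have hα := sub_nonneg.2 (sq_mul_sq_div_four_le_pow_four hDE)
  rw [← Real.norm_of_nonneg (by positivity :
    0 ≤ 1 + 2 * (D - E) ^ 2 + ((D - E) ^ 4 - (D - E) ^ 2 * D ^ 2 / 4)), ← norm_real]
  push_cast
  congr 1
  ring

theorem norm_coeffFunctional_le_of_janowski {D E : ℝ} (hD : |D| ≤ 1) (hE : |E| ≤ 1)
    (hDE : 1 + |D| ≤ 2 * (D - E)) {g : ℂ → ℂ} {b : ℕ → ℂ} (hb0 : b 0 = 0) (hb1 : b 1 = 1)
    (hsum : ∀ z ∈ ball (0 : ℂ) 1, HasSum (fun n ↦ b n * z ^ n) (g z)) {ω : ℂ → ℂ}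
    (hω : AnalyticOn ℂ ω (ball 0 1)) (hω0 : ω 0 = 0) (hmaps : MapsTo ω (ball 0 1) (ball 0 1))
    (heq : ∀ z ∈ ball (0 : ℂ) 1, z ≠ 0 →
      z * deriv g z / g z = (1 + D * ω z) / (1 + E * ω z)) :
    ‖coeffFunctional (b 2) (b 3)‖ ≤
      1 + 2 * (D - E) ^ 2 + ((D - E) ^ 4 - (D - E) ^ 2 * D ^ 2 / 4) := by
  obtain ⟨h₂, h₃⟩ := janowski_coeff_relations (by simpa using hD) (by simpa using hE) hb0 hb1
    hsum (hω.analyticAt (isOpen_ball.mem_nhds (mem_ball_self one_pos))) hω0 hmaps heq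
  rw [h₂] at h₃ ⊢
  exact norm_coeffFunctional_le hDE h₃
    (norm_deriv_dslope_le_one_sub_sq hω.differentiableOn hω0 hmaps)

theorem exists_janowski_norm_coeffFunctional_eq {D E : ℝ} (hD : |D| ≤ 1) (hE : |E| ≤ 1)
    (hDE : 1 + |D| ≤ 2 * (D - E)) :
    ∃ (g : ℂ → ℂ) (b : ℕ → ℂ), b 0 = 0 ∧ b 1 = 1 ∧
      (∀ z ∈ ball (0 : ℂ) 1, HasSum (fun n ↦ b n * z ^ n) (g z)) ∧
      (∃ ω : ℂ → ℂ, AnalyticOn ℂ ω (ball 0 1) ∧ ω 0 = 0 ∧ MapsTo ω (ball 0 1) (ball 0 1) ∧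
        ∀ z ∈ ball (0 : ℂ) 1, z ≠ 0 → z * deriv g z / g z = (1 + D * ω z) / (1 + E * ω z)) ∧
      ‖coeffFunctional (b 2) (b 3)‖ =
        1 + 2 * (D - E) ^ 2 + ((D - E) ^ 4 - (D - E) ^ 2 * D ^ 2 / 4) := by
  have hD' : ‖(D : ℂ)‖ ≤ 1 := by simpa using hD
  have hE' : ‖(E : ℂ)‖ ≤ 1 := by simpa using hE
  set ω : ℂ → ℂ := fun z ↦ I * z
  have hωd : DifferentiableOn ℂ ω (ball 0 1) := (differentiable_id.const_mul I).differentiableOn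
  have hωmaps : MapsTo ω (ball 0 1) (ball 0 1) := fun z hz ↦ by simpa [ω] using hz
  obtain ⟨g, hgd, hg0, hg1, hgeq⟩ :=
    exists_janowski_of_schwarz hE' hωd (by simp [ω]) hωmaps
  set b : ℕ → ℂ := fun n ↦ iteratedDeriv n g 0 / n.factorial
  have hb0 : b 0 = 0 := by simp [b, hg0]
  have hb1 : b 1 = 1 := by simp [b, hg1]
  have hsum (z : ℂ) (hz : z ∈ ball (0 : ℂ) 1) : HasSum (fun n ↦ b n * z ^ n) (g z) := by
    simpa [b, div_eq_inv_mul, mul_comm, mul_left_comm] using hasSum_taylorSeries_on_ball hgd hz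
  have hωan : AnalyticOn ℂ ω (ball 0 1) := hωd.analyticOn isOpen_ball
  obtain ⟨h₂, h₃⟩ := janowski_coeff_relations hD' hE' hb0 hb1 hsum
    (hωan.analyticAt (isOpen_ball.mem_nhds (mem_ball_self one_pos))) (by simp [ω]) hωmaps hgeq
  refine ⟨g, b, hb0, hb1, hsum, ⟨ω, hωan, by simp [ω], hωmaps, hgeq⟩, ?_⟩
  rw [dslope_const_mul_id, deriv_const, mul_zero, zero_add] at h₃
  rw [dslope_const_mul_id] at h₂
  rw [h₂] at h₃ ⊢
  exact norm_coeffFunctional_mul_I hDE h₃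

theorem stmt_5 (D E : ℝ) (hE : -1 ≤ E) (hED : E < D) (hD : D ≤ 1)
    (hcond : E ≤ min ((D - 1) / 2) ((3 * D - 1) / 2)) :
    (∀ (g : ℂ → ℂ) (b : ℕ → ℂ),
        b 0 = 0 →
        b 1 = 1 →
        (∀ z ∈ Metric.ball (0:ℂ) 1, HasSum (fun n => b n * z ^ n) (g z)) →
        (∃ ω : ℂ → ℂ, AnalyticOn ℂ ω (Metric.ball (0:ℂ) 1) ∧ ω 0 = 0 ∧ (∀ z ∈ Metric.ball (0:ℂ) 1, ω z ∈ Metric.ball (0:ℂ) 1) ∧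
          (∀ z ∈ Metric.ball (0:ℂ) 1, z ≠ 0 → z * deriv g z / g z = (1 + (D : ℂ) * ω z) / (1 + (E : ℂ) * ω z))) →
        ‖(2 * b 2 ^ 2 * b 3 - 2 * b 2 ^ 2 - b 3 ^ 2 + 1)‖ ≤ 1 + 2 * (D - E) ^ 2 + (3 * D ^ 2 - 5 * D * E + 2 * E ^ 2) * (D ^ 2 - 3 * D * E + 2 * E ^ 2) / 4) ∧
    (∃ (g : ℂ → ℂ) (b : ℕ → ℂ),
        b 0 = 0 ∧
        b 1 = 1 ∧
        (∀ z ∈ Metric.ball (0:ℂ) 1, HasSum (fun n => b n * z ^ n) (g z)) ∧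
        (∃ ω : ℂ → ℂ, AnalyticOn ℂ ω (Metric.ball (0:ℂ) 1) ∧ ω 0 = 0 ∧ (∀ z ∈ Metric.ball (0:ℂ) 1, ω z ∈ Metric.ball (0:ℂ) 1) ∧
          (∀ z ∈ Metric.ball (0:ℂ) 1, z ≠ 0 → z * deriv g z / g z = (1 + (D : ℂ) * ω z) / (1 + (E : ℂ) * ω z))) ∧
        ‖(2 * b 2 ^ 2 * b 3 - 2 * b 2 ^ 2 - b 3 ^ 2 + 1)‖ = 1 + 2 * (D - E) ^ 2 + (3 * D ^ 2 - 5 * D * E + 2 * E ^ 2) * (D ^ 2 - 3 * D * E + 2 * E ^ 2) / 4) := by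
  have hD₁ : |D| ≤ 1 := abs_le.2 ⟨by linarith, hD⟩
  have hE₁ : |E| ≤ 1 := abs_le.2 ⟨hE, by linarith⟩
  have hDE : 1 + |D| ≤ 2 * (D - E) := by
    rw [le_min_iff] at hcond
    cases abs_cases D <;> linarith
  have hM : 1 + 2 * (D - E) ^ 2 +
        (3 * D ^ 2 - 5 * D * E + 2 * E ^ 2) * (D ^ 2 - 3 * D * E + 2 * E ^ 2) / 4 =
      1 + 2 * (D - E) ^ 2 + ((D - E) ^ 4 - (D - E) ^ 2 * D ^ 2 / 4) := by ring
  rw [hM]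
  exact ⟨fun g b hb0 hb1 hsum ⟨ω, hω, hω0, hmaps, heq⟩ ↦
      norm_coeffFunctional_le_of_janowski hD₁ hE₁ hDE hb0 hb1 hsum hω hω0 hmaps heq,
    exists_janowski_norm_coeffFunctional_eq hD₁ hE₁ hDE⟩
end

section
/- Let Φ be a biholomorphic function on the unit disk with Φ(0) = 1, Re Φ > 0, Φ'(0) > 0, Φ''(0) ∈ ℝ, and |Φ''(0) + 2Φ'(0)^2| ≥ 2Φ'(0). If g(z) = z + b_2 z^2 + b_3 z^3 + ... is analytic on U and z g'(z)/g(z) is subordinate to Φ, then |b_2^2 - b_3^2| ≤ (Φ'(0)^2/4)(Φ''(0)/(2Φ'(0)) + Φ'(0))^2 + Φ'(0)^2. -/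
/-!
Write `ω(z) = z h(z)` for the Schwarz function and `G = Φ ∘ ω`. Comparing the Taylor coefficients of
order one, two and three in `z g' = G g` gives `b₂ = Φ'(0) c₁` and
`b₃ = ((Φ''(0) + 2 Φ'(0)²) c₁² + 2 Φ'(0) c₂) / 4` with `c₁ = h(0)`, `c₂ = h'(0)`, and Schwarz–Pick
applied to `h` gives `|c₂| ≤ 1 - |c₁|²`. The resulting bound for `|b₂|² + |b₃|²` is a convex
quadratic in `|c₁|² ∈ [0, 1]`, hence largest at `|c₁| = 1`.
-/

open Complex Metric Set Filter Topology ComplexConjugate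
open scoped NNReal ENNReal Nat

theorem hasFPowerSeriesOnBall_ofScalars_of_hasSum_s8 {𝕜 : Type*} [RCLike 𝕜] {f : 𝕜 → 𝕜}
    {c : ℕ → 𝕜} {r : ℝ≥0} (hr : 0 < r)
    (hf : ∀ z ∈ ball (0 : 𝕜) r, HasSum (fun n => c n * z ^ n) (f z)) :
    HasFPowerSeriesOnBall f (FormalMultilinearSeries.ofScalars 𝕜 c) 0 r := by
  refine ⟨ENNReal.le_of_forall_nnreal_lt fun s hs => ?_, by simpa using hr, fun {y} hy => ?_⟩
  · have hs : ((s : ℝ) : 𝕜) ∈ ball (0 : 𝕜) r := by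
      simpa [abs_of_nonneg s.2] using hs
    refine (FormalMultilinearSeries.ofScalars 𝕜 c).le_radius_of_tendsto (l := 0) ?_
    simpa [FormalMultilinearSeries.ofScalars_norm, abs_of_nonneg s.2] using
      (hf _ hs).summable.tendsto_atTop_zero.norm
  · have hy : y ∈ ball (0 : 𝕜) r := by simpa using hy
    simpa [FormalMultilinearSeries.ofScalars_apply_eq, mul_comm] using hf y hy

section Taylor

variable {𝕜 : Type*} [NontriviallyNormedField 𝕜]

theorem HasFPowerSeriesOnBall.iteratedDeriv_eq_factorial_mul [CompleteSpace 𝕜] {f : 𝕜 → 𝕜}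
    {c : ℕ → 𝕜} {x : 𝕜} {r : ℝ≥0∞}
    (hf : HasFPowerSeriesOnBall f (FormalMultilinearSeries.ofScalars 𝕜 c) x r) (n : ℕ) :
    iteratedDeriv n f x = n ! * c n := by
  rw [iteratedDeriv_eq_iteratedFDeriv, ← hf.factorial_smul 1 n]
  simp

theorem iteratedDeriv_succ_id_mul_zero {f : 𝕜 → 𝕜} {n : ℕ} (hf : ContDiffAt 𝕜 (n + 1) f 0) :
    iteratedDeriv (n + 1) (fun z => z * f z) 0 = (n + 1) * iteratedDeriv n f 0 := by
  rw [iteratedDeriv_fun_mul (by exact_mod_cast contDiffAt_id) hf, Finset.sum_range_succ']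
  simp [iteratedDeriv_fun_id_zero]

theorem iteratedDeriv_two_comp [CompleteSpace 𝕜] {Φ ω : 𝕜 → 𝕜} {x : 𝕜}
    (hΦ : AnalyticAt 𝕜 Φ (ω x)) (hω : AnalyticAt 𝕜 ω x) :
    iteratedDeriv 2 (Φ ∘ ω) x =
      iteratedDeriv 2 Φ (ω x) * deriv ω x ^ 2 + deriv Φ (ω x) * iteratedDeriv 2 ω x := by
  have hderiv : deriv (Φ ∘ ω) =ᶠ[𝓝 x] fun y => deriv Φ (ω y) * deriv ω y := by
    filter_upwards [hω.eventually_analyticAt,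
      hω.continuousAt.eventually hΦ.eventually_analyticAt] with y hωy hΦy
    exact deriv_comp y hΦy.differentiableAt hωy.differentiableAt
  have hΦ' : HasDerivAt (fun y => deriv Φ (ω y)) (iteratedDeriv 2 Φ (ω x) * deriv ω x) x := by
    rw [iteratedDeriv_succ, iteratedDeriv_one]
    exact hΦ.deriv.differentiableAt.hasDerivAt.comp x hω.differentiableAt.hasDerivAt
  have hω' : HasDerivAt (deriv ω) (iteratedDeriv 2 ω x) x := by
    rw [iteratedDeriv_succ, iteratedDeriv_one]
    exact hω.deriv.differentiableAt.hasDerivAt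
  rw [iteratedDeriv_succ, iteratedDeriv_one, hderiv.deriv_eq, (hΦ'.fun_mul hω').deriv]
  ring

theorem iteratedDeriv_succ_mul_eq_of_id_mul_deriv_eq [CompleteSpace 𝕜] {g G : 𝕜 → 𝕜}
    (hg : AnalyticAt 𝕜 g 0) (hG : AnalyticAt 𝕜 G 0)
    (h : (fun z => z * deriv g z) =ᶠ[𝓝 0] fun z => G z * g z) (n : ℕ) :
    (n + 1) * iteratedDeriv (n + 1) g 0 = ∑ i ∈ Finset.range (n + 2),
      (n + 1).choose i * iteratedDeriv i G 0 * iteratedDeriv (n + 1 - i) g 0 := by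
  rw [iteratedDeriv_succ', ← iteratedDeriv_succ_id_mul_zero hg.deriv.contDiffAt,
    h.iteratedDeriv_eq, iteratedDeriv_fun_mul hG.contDiffAt hg.contDiffAt]

theorem iteratedDeriv_two_three_of_id_mul_deriv_eq [CompleteSpace 𝕜] [CharZero 𝕜] {g G : 𝕜 → 𝕜}
    (hg : AnalyticAt 𝕜 g 0) (hG : AnalyticAt 𝕜 G 0) (hg0 : g 0 = 0) (hg1 : deriv g 0 = 1)
    (h : (fun z => z * deriv g z) =ᶠ[𝓝 0] fun z => G z * g z) :
    iteratedDeriv 2 g 0 = 2 * deriv G 0 ∧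
      iteratedDeriv 3 g 0 = 3 / 2 * (iteratedDeriv 2 G 0 + 2 * deriv G 0 ^ 2) := by
  have e := iteratedDeriv_succ_mul_eq_of_id_mul_deriv_eq hg hG h
  have e0 := e 0
  have e1 := e 1
  have e2 := e 2
  simp only [Finset.sum_range_succ, Finset.sum_range_zero] at e0 e1 e2
  norm_num [hg0, hg1, iteratedDeriv_one] at e0 e1 e2
  -- `e0` reads `1 = G 0`.
  rw [← e0] at e1 e2
  have h2 : iteratedDeriv 2 g 0 = 2 * deriv G 0 := by linear_combination e1
  exact ⟨h2, by linear_combination (e2 + 3 * deriv G 0 * h2) / 2⟩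

theorem id_mul_deriv_eventuallyEq_of_div_eq {g F : 𝕜 → 𝕜} {s : Set 𝕜} (hs : s ∈ 𝓝 0)
    (hg0 : g 0 = 0) (hF : ∀ z ∈ s, F z ≠ 0) (h : ∀ z ∈ s, z ≠ 0 → z * deriv g z / g z = F z) :
    (fun z => z * deriv g z) =ᶠ[𝓝 0] fun z => F z * g z := by
  filter_upwards [hs] with z hz
  rcases eq_or_ne z 0 with rfl | hz0
  · simp [hg0]
  have hgz : g z ≠ 0 := fun hgz => hF z hz (by simpa [hgz] using (h z hz hz0).symm)
  exact (div_eq_iff hgz).1 (h z hz hz0)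

theorem iteratedDeriv_two_three_of_id_mul_deriv_eq_comp [CompleteSpace 𝕜] [CharZero 𝕜]
    {g Φ ω : 𝕜 → 𝕜} (hg : AnalyticAt 𝕜 g 0) (hΦ : AnalyticAt 𝕜 Φ 0) (hω : AnalyticAt 𝕜 ω 0)
    (hg0 : g 0 = 0) (hg1 : deriv g 0 = 1) (hω0 : ω 0 = 0)
    (h : (fun z => z * deriv g z) =ᶠ[𝓝 0] fun z => Φ (ω z) * g z) :
    iteratedDeriv 2 g 0 = 2 * (deriv Φ 0 * deriv ω 0) ∧
      iteratedDeriv 3 g 0 = 3 / 2 * ((iteratedDeriv 2 Φ 0 + 2 * deriv Φ 0 ^ 2) * deriv ω 0 ^ 2 +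
        deriv Φ 0 * iteratedDeriv 2 ω 0) := by
  rw [← hω0] at hΦ
  have hG1 : deriv (Φ ∘ ω) 0 = deriv Φ 0 * deriv ω 0 := by
    rw [deriv_comp 0 hΦ.differentiableAt hω.differentiableAt, hω0]
  have hG2 := iteratedDeriv_two_comp hΦ hω
  rw [hω0] at hG2
  obtain ⟨hg2, hg3⟩ := iteratedDeriv_two_three_of_id_mul_deriv_eq hg (hΦ.comp hω) hg0 hg1 h
  rw [hG1] at hg2
  rw [hG1, hG2] at hg3
  exact ⟨hg2, by rw [hg3]; ring⟩

end Taylor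

namespace Complex

theorem normSq_one_sub_conj_mul_sub_normSq_sub (a w : ℂ) :
    normSq (1 - conj a * w) - normSq (w - a) = (1 - normSq a) * (1 - normSq w) := by
  simp only [normSq_apply, sub_re, sub_im, mul_re, mul_im, one_re, one_im, conj_re, conj_im]
  ring

theorem one_sub_conj_mul_ne_zero {a w : ℂ} (ha : ‖a‖ < 1) (hw : ‖w‖ < 1) : 1 - conj a * w ≠ 0 := by
  refine sub_ne_zero.2 fun h => ?_
  have : ‖conj a * w‖ < 1 := by
    rw [norm_mul, norm_conj]
    nlinarith [norm_nonneg a, norm_nonneg w]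
  rw [← h, norm_one] at this
  exact this.false

theorem norm_moebius_lt_one {a w : ℂ} (ha : ‖a‖ < 1) (hw : ‖w‖ < 1) :
    ‖(w - a) / (1 - conj a * w)‖ < 1 := by
  have hden := norm_pos_iff.2 (one_sub_conj_mul_ne_zero ha hw)
  rw [norm_div, div_lt_one hden, ← sq_lt_sq₀ (norm_nonneg _) hden.le, Complex.sq_norm,
    Complex.sq_norm, ← sub_pos, normSq_one_sub_conj_mul_sub_normSq_sub, ← Complex.sq_norm,
    ← Complex.sq_norm]
  exact mul_pos (by nlinarith [norm_nonneg a]) (by nlinarith [norm_nonneg w])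

theorem hasDerivAt_moebius {a : ℂ} (ha : ‖a‖ < 1) :
    HasDerivAt (fun w => (w - a) / (1 - conj a * w)) (1 / (1 - ‖a‖ ^ 2 : ℝ)) a := by
  have hden := one_sub_conj_mul_ne_zero ha ha
  have hca : conj a * a = ((‖a‖ ^ 2 : ℝ) : ℂ) := by rw [mul_comm, mul_conj, normSq_eq_norm_sq]
  refine (((hasDerivAt_id a).sub_const a).div
    (((hasDerivAt_id a).const_mul (conj a)).const_sub 1) hden).congr_deriv ?_
  rw [hca] at hden
  simp only [id, sub_self, zero_mul, sub_zero, one_mul, hca]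
  rw [ofReal_sub, ofReal_one]
  field_simp

theorem norm_deriv_zero_le_one_sub_sq_of_mapsTo_ball {f : ℂ → ℂ}
    (hd : DifferentiableOn ℂ f (ball 0 1)) (hf : MapsTo f (ball 0 1) (ball 0 1)) :
    ‖deriv f 0‖ ≤ 1 - ‖f 0‖ ^ 2 := by
  have h0 : (0 : ℂ) ∈ ball (0 : ℂ) 1 := mem_ball_self one_pos
  set a := f 0
  have ha : ‖a‖ < 1 := mem_ball_zero_iff.1 (hf h0)
  set F := fun z => (f z - a) / (1 - conj a * f z)
  have hF : MapsTo F (ball 0 1) (closedBall (F 0) 1) := fun z hz => by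
    simpa [F, a] using (norm_moebius_lt_one ha (mem_ball_zero_iff.1 (hf hz))).le
  have hFd : DifferentiableOn ℂ F (ball 0 1) :=
    (hd.sub_const a).div ((differentiableOn_const 1).sub (hd.const_mul (conj a)))
      fun z hz => one_sub_conj_mul_ne_zero ha (mem_ball_zero_iff.1 (hf hz))
  have hF' : HasDerivAt F (1 / (1 - ‖a‖ ^ 2 : ℝ) * deriv f 0) 0 :=
    (hasDerivAt_moebius ha).comp 0 (hd.differentiableAt (isOpen_ball.mem_nhds h0)).hasDerivAt
  have hpos : 0 < 1 - ‖a‖ ^ 2 := by nlinarith [norm_nonneg a]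
  have := norm_deriv_le_one_of_mapsTo_ball hFd hF one_pos
  rw [hF'.deriv, norm_mul, norm_div, norm_one, norm_real, Real.norm_of_nonneg hpos.le] at this
  rwa [one_div_mul_eq_div, div_le_one hpos] at this

theorem norm_deriv_zero_le_one_sub_sq_of_mapsTo_closedBall {f : ℂ → ℂ}
    (hd : DifferentiableOn ℂ f (ball 0 1)) (hf : MapsTo f (ball 0 1) (closedBall 0 1)) :
    ‖deriv f 0‖ ≤ 1 - ‖f 0‖ ^ 2 := by
  by_cases hball : MapsTo f (ball 0 1) (ball 0 1)
  · exact norm_deriv_zero_le_one_sub_sq_of_mapsTo_ball hd hball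
  obtain ⟨z₀, hz₀, hfz₀⟩ : ∃ z₀ ∈ ball (0 : ℂ) 1, ‖f z₀‖ = 1 := by
    simp only [MapsTo, not_forall, mem_ball_zero_iff, not_lt] at hball
    obtain ⟨z₀, hz₀, h1⟩ := hball
    have hz₀ : z₀ ∈ ball (0 : ℂ) 1 := mem_ball_zero_iff.2 hz₀
    exact ⟨z₀, hz₀, le_antisymm (mem_closedBall_zero_iff.1 (hf hz₀)) h1⟩
  have hmax : IsMaxOn (norm ∘ f) (ball 0 1) z₀ := fun z hz => by
    simpa [hfz₀] using hf hz
  have hconst := eqOn_of_isPreconnected_of_isMaxOn_norm (convex_ball (0 : ℂ) 1).isPreconnected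
    isOpen_ball hd hz₀ hmax
  have h0 : (0 : ℂ) ∈ ball (0 : ℂ) 1 := mem_ball_self one_pos
  have hderiv : deriv f 0 = 0 := by
    rw [(eventuallyEq_of_mem (isOpen_ball.mem_nhds h0) hconst).deriv_eq]
    exact deriv_const 0 (f z₀)
  rw [hderiv, hconst h0, Function.const_apply, hfz₀]
  norm_num

theorem norm_iteratedDeriv_two_le_of_mapsTo_ball {ω : ℂ → ℂ}
    (hd : DifferentiableOn ℂ ω (ball 0 1)) (hω : MapsTo ω (ball 0 1) (ball 0 1)) (hω0 : ω 0 = 0) :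
    ‖iteratedDeriv 2 ω 0‖ ≤ 2 * (1 - ‖deriv ω 0‖ ^ 2) := by
  set h := dslope ω 0
  have hω_eq : ω = fun z => z * h z := funext fun z => by
    simpa using (sub_smul_dslope_of_zero hω0 z).symm
  have hhd : DifferentiableOn ℂ h (ball 0 1) :=
    (differentiableOn_dslope (ball_mem_nhds 0 one_pos)).2 hd
  have hh : MapsTo h (ball 0 1) (closedBall 0 1) := fun z hz => by
    simpa using norm_dslope_le_div_of_mapsTo_ball hd
      (by simpa [hω0] using hω.mono_right ball_subset_closedBall) hz
  have hω' : deriv ω 0 = h 0 := (dslope_same ω 0).symm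
  have hω'' : iteratedDeriv 2 ω 0 = 2 * deriv h 0 := by
    have := iteratedDeriv_succ_id_mul_zero (n := 1)
      (hhd.analyticAt (ball_mem_nhds 0 one_pos)).contDiffAt
    rw [hω_eq]
    simpa [one_add_one_eq_two] using this
  rw [hω', hω'', norm_mul, Complex.norm_two]
  exact mul_le_mul_of_nonneg_left (norm_deriv_zero_le_one_sub_sq_of_mapsTo_closedBall hhd hh)
    two_pos.le

end Complex

theorem norm_sq_sub_sq_le_of_schwarz_coeffs {p : ℝ} {Q c₁ c₂ : ℂ} (hp : 0 < p) (hc₁ : ‖c₁‖ ≤ 1)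
    (hc₂ : ‖c₂‖ ≤ 2 * (1 - ‖c₁‖ ^ 2)) :
    ‖(p * c₁) ^ 2 - ((Q * c₁ ^ 2 + p * c₂) / 4) ^ 2‖ ≤ ‖Q‖ ^ 2 / 16 + p ^ 2 := by
  have hx : ‖c₁‖ ^ 2 ≤ 1 := pow_le_one₀ (norm_nonneg c₁) hc₁
  have hb₃ : ‖(Q * c₁ ^ 2 + p * c₂) / 4‖ ≤ (‖Q‖ * ‖c₁‖ ^ 2 + p * (2 * (1 - ‖c₁‖ ^ 2))) / 4 := by
    rw [norm_div, Complex.norm_ofNat]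
    gcongr
    refine (norm_add_le _ _).trans ?_
    rw [norm_mul, norm_mul, norm_pow, Complex.norm_real, Real.norm_of_nonneg hp.le]
    gcongr
  calc ‖(p * c₁) ^ 2 - ((Q * c₁ ^ 2 + p * c₂) / 4) ^ 2‖
      ≤ ‖(p * c₁)‖ ^ 2 + ‖(Q * c₁ ^ 2 + p * c₂) / 4‖ ^ 2 :=
        (norm_sub_le _ _).trans_eq (by rw [norm_pow, norm_pow])
    _ ≤ p ^ 2 * ‖c₁‖ ^ 2 + ((‖Q‖ * ‖c₁‖ ^ 2 + p * (2 * (1 - ‖c₁‖ ^ 2))) / 4) ^ 2 := by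
        rw [norm_mul, Complex.norm_real, Real.norm_of_nonneg hp.le, mul_pow]
        gcongr
    _ ≤ ‖Q‖ ^ 2 / 16 + p ^ 2 := by
        nlinarith [mul_nonneg (mul_nonneg (sub_nonneg.2 hx) (sq_nonneg ‖c₁‖))
            (sq_nonneg (‖Q‖ - 2 * p)),
          mul_nonneg (sub_nonneg.2 hx) (sq_nonneg ‖Q‖), mul_nonneg (sub_nonneg.2 hx) (sq_nonneg p)]

theorem stmt_8_general (Φ : ℂ → ℂ)
    (hΦa : AnalyticOn ℂ Φ (Metric.ball (0:ℂ) 1)) (hΦre : ∀ z ∈ Metric.ball (0:ℂ) 1, 0 < (Φ z).re) (hd1re : 0 < (deriv Φ 0).re) (hd1im : (deriv Φ 0).im = 0)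
    (hd2im : (iteratedDeriv 2 Φ 0).im = 0)
    (g : ℂ → ℂ) (b : ℕ → ℂ)
    (hb0 : b 0 = 0) (hb1 : b 1 = 1)
    (hb : ∀ z ∈ Metric.ball (0:ℂ) 1, HasSum (fun n => b n * z ^ n) (g z))
    (hsub : (∃ ω : ℂ → ℂ, AnalyticOn ℂ ω (Metric.ball (0:ℂ) 1) ∧ ω 0 = 0 ∧ (∀ z ∈ Metric.ball (0:ℂ) 1, ω z ∈ Metric.ball (0:ℂ) 1) ∧
          (∀ z ∈ Metric.ball (0:ℂ) 1, z ≠ 0 → z * deriv g z / g z = Φ (ω z)))) :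
    ‖b 2 ^ 2 - b 3 ^ 2‖ ≤
      (deriv Φ 0).re ^ 2 / 4 * ((iteratedDeriv 2 Φ 0).re / (2 * (deriv Φ 0).re) + (deriv Φ 0).re) ^ 2 + (deriv Φ 0).re ^ 2 := by
  obtain ⟨ω, hωa, hω0, hωmaps, hωeq⟩ := hsub
  have hU : ball (0 : ℂ) 1 ∈ 𝓝 0 := ball_mem_nhds 0 one_pos
  have hgps := hasFPowerSeriesOnBall_ofScalars_of_hasSum_s8 (f := g) (c := b) one_pos
    (by simpa using hb)
  have hcoeff := hgps.iteratedDeriv_eq_factorial_mul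
  have hg0 : g 0 = 0 := by simpa [hb0] using hcoeff 0
  have hg1 : deriv g 0 = 1 := by simpa [hb1] using hcoeff 1
  have hω : AnalyticAt ℂ ω 0 := hωa.analyticAt hU
  have hg := id_mul_deriv_eventuallyEq_of_div_eq hU hg0
    (fun z hz hΦz => by simpa [hΦz] using hΦre (ω z) (hωmaps z hz)) hωeq
  obtain ⟨hg2, hg3⟩ := iteratedDeriv_two_three_of_id_mul_deriv_eq_comp hgps.analyticAt
    (hΦa.analyticAt hU) hω hg0 hg1 hω0 hg
  set p := (deriv Φ 0).re
  set Q := iteratedDeriv 2 Φ 0 + 2 * deriv Φ 0 ^ 2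
  have hp : deriv Φ 0 = p := Complex.ext rfl (by simpa using hd1im)
  rw [hcoeff] at hg2 hg3
  norm_num [Nat.factorial] at hg2 hg3
  have hb2 : b 2 = p * deriv ω 0 := by rw [← hp, hg2]
  have hb3 : b 3 = (Q * deriv ω 0 ^ 2 + p * iteratedDeriv 2 ω 0) / 4 := by
    rw [← hp]; linear_combination hg3 / 6
  have hRHS : p ^ 2 / 4 * ((iteratedDeriv 2 Φ 0).re / (2 * p) + p) ^ 2 + p ^ 2 =
      ‖Q‖ ^ 2 / 16 + p ^ 2 := by
    rw [show Q = ((iteratedDeriv 2 Φ 0).re + 2 * p ^ 2 : ℝ) from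
        Complex.ext (by simp [Q, p, sq, hd1im]) (by simp [Q, sq, hd1im, hd2im]),
      norm_real, Real.norm_eq_abs, sq_abs]
    field_simp
    ring
  rw [hb2, hb3, hRHS]
  exact norm_sq_sub_sq_le_of_schwarz_coeffs hd1re
    (norm_deriv_le_one_of_mapsTo_ball hωa.differentiableOn
      (by rw [hω0]; exact fun z hz => ball_subset_closedBall (hωmaps z hz)) one_pos)
    (norm_iteratedDeriv_two_le_of_mapsTo_ball hωa.differentiableOn hωmaps hω0)

theorem stmt_8 (Φ : ℂ → ℂ)
    (hΦa : AnalyticOn ℂ Φ (Metric.ball (0:ℂ) 1)) (hΦi : Set.InjOn Φ (Metric.ball (0:ℂ) 1)) (hΦ0 : Φ 0 = 1) (hΦre : ∀ z ∈ Metric.ball (0:ℂ) 1, 0 < (Φ z).re) (hd1re : 0 < (deriv Φ 0).re) (hd1im : (deriv Φ 0).im = 0)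
    (hd2im : (iteratedDeriv 2 Φ 0).im = 0)
    (hcond : 2 * (deriv Φ 0).re ≤ ‖iteratedDeriv 2 Φ 0 + 2 * (deriv Φ 0) ^ 2‖)
    (g : ℂ → ℂ) (b : ℕ → ℂ)
    (hb0 : b 0 = 0) (hb1 : b 1 = 1)
    (hb : ∀ z ∈ Metric.ball (0:ℂ) 1, HasSum (fun n => b n * z ^ n) (g z))
    (hsub : (∃ ω : ℂ → ℂ, AnalyticOn ℂ ω (Metric.ball (0:ℂ) 1) ∧ ω 0 = 0 ∧ (∀ z ∈ Metric.ball (0:ℂ) 1, ω z ∈ Metric.ball (0:ℂ) 1) ∧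
          (∀ z ∈ Metric.ball (0:ℂ) 1, z ≠ 0 → z * deriv g z / g z = Φ (ω z)))) :
    ‖b 2 ^ 2 - b 3 ^ 2‖ ≤
      (deriv Φ 0).re ^ 2 / 4 * ((iteratedDeriv 2 Φ 0).re / (2 * (deriv Φ 0).re) + (deriv Φ 0).re) ^ 2 + (deriv Φ 0).re ^ 2 :=
  stmt_8_general Φ hΦa hΦre hd1re hd1im hd2im g b hb0 hb1 hb hsub
end
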